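/- Let v_s be exponentially distributed with rate s > 0 and v_b exponentially distributed with rate b > 0, independent. Then for every p ≥ 0, E[W_p] = e^{−bp}·((1 − e^{−sp})·(p + 1/b) + e^{−sp}·(p + 1/s)) + (1 − e^{−bp})·(1/s), and E[max(v_s, v_b)] = 1/s + 1/b − 1/(s+b). -/

import Mathlib

/-!
Split the welfare at price `p` as
`W_p = 1{v_s ≤ p}·v_b 1{v_b ≥ p} + v_s 1{v_s > p}·1{v_b ≥ p} + v_s·1{v_b < p}`.
By independence each term factors into one-dimensional exponential moments, and
`E[X; X > p] = e^{-rp}(p + 1/r)` for `X ~ Exp(r)`. For the maximum, the layer-cake formula gives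
`E[max] = ∫₀^∞ (1 - F_s(t) F_b(t)) dt = ∫₀^∞ (e^{-st} + e^{-bt} - e^{-(s+b)t}) dt`.
-/

open MeasureTheory ProbabilityTheory Real Set Filter Topology

lemma integral_exp_neg_mul_Ioi_zero {r : ℝ} (hr : 0 < r) :
    ∫ t in Ioi 0, exp (-(r * t)) = 1 / r := by
  simpa [neg_mul, div_neg, neg_div] using integral_exp_mul_Ioi (neg_lt_zero.mpr hr) 0

noncomputable def fixedPriceWelfare (p x y : ℝ) : ℝ := if x ≤ p ∧ p ≤ y then y else x

lemma fixedPriceWelfare_eq (p x y : ℝ) :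
    fixedPriceWelfare p x y = (Iic p).indicator 1 x * (Ici p).indicator id y
      + (Ioi p).indicator id x * (Ici p).indicator 1 y + x * (Iio p).indicator 1 y := by
  by_cases hx : x ≤ p <;> by_cases hy : p ≤ y <;>
    simp [fixedPriceWelfare, indicator, hx, hy, not_le.mp, not_lt.mpr]

lemma norm_indicator_one_le (s : Set ℝ) (x : ℝ) : ‖s.indicator (1 : ℝ → ℝ) x‖ ≤ 1 :=
  (norm_indicator_le_norm_self _ _).trans (by simp)

namespace MeasureTheory

variable {Ω : Type*} [MeasurableSpace Ω] {μ : Measure Ω}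

lemma Integrable.indicator_id_comp {Z : Ω → ℝ} {s : Set ℝ} (hZi : Integrable Z μ)
    (hZ : Measurable Z) (hs : MeasurableSet s) : Integrable (fun ω => s.indicator id (Z ω)) μ :=
  hZi.mono ((measurable_id.indicator hs).comp hZ).aestronglyMeasurable
    (ae_of_all _ fun _ => norm_indicator_le_norm_self _ _)

lemma Integrable.indicator_one_comp_mul {f Z : Ω → ℝ} {s : Set ℝ} (hf : Integrable f μ)
    (hZ : Measurable Z) (hs : MeasurableSet s) :
    Integrable (fun ω => s.indicator 1 (Z ω) * f ω) μ :=
  hf.bdd_mul ((measurable_one.indicator hs).comp hZ).aestronglyMeasurable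
    (ae_of_all _ fun ω => norm_indicator_one_le s (Z ω))

lemma Integrable.mul_indicator_one_comp {f Z : Ω → ℝ} {s : Set ℝ} (hf : Integrable f μ)
    (hZ : Measurable Z) (hs : MeasurableSet s) :
    Integrable (fun ω => f ω * s.indicator 1 (Z ω)) μ :=
  hf.mul_bdd ((measurable_one.indicator hs).comp hZ).aestronglyMeasurable
    (ae_of_all _ fun ω => norm_indicator_one_le s (Z ω))

end MeasureTheory

namespace ProbabilityTheory

instance nullSingletonClass_expMeasure (r : ℝ) : NullSingletonClass (expMeasure r) :=
  inferInstanceAs (NullSingletonClass (volume.withDensity (gammaPDF 1 r)))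

variable {r : ℝ}

lemma setIntegral_expMeasure_of_subset_Ici (hr : 0 ≤ r) {s : Set ℝ} (hs : MeasurableSet s)
    (hs0 : s ⊆ Ici 0) (g : ℝ → ℝ) :
    ∫ x in s, g x ∂expMeasure r = ∫ x in s, r * exp (-(r * x)) * g x := by
  change ∫ x in s, g x ∂volume.withDensity (exponentialPDF r) = _
  rw [setIntegral_withDensity_eq_setIntegral_toReal_smul₀' (f := exponentialPDF r) s
    (measurable_exponentialPDFReal r).ennreal_ofReal.aemeasurable
    (ae_of_all _ fun _ => ENNReal.ofReal_lt_top) g]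
  refine setIntegral_congr_fun hs fun x hx => ?_
  rw [exponentialPDF_of_nonneg (hs0 hx), ENNReal.toReal_ofReal (by positivity), smul_eq_mul]

lemma tendsto_add_inv_mul_exp_neg_atTop (hr : 0 < r) :
    Tendsto (fun x => (x + 1 / r) * exp (-(r * x))) atTop (𝓝 0) := by
  have h : Tendsto (fun u => (u + 1) * exp (-u)) atTop (𝓝 0) := by
    simpa [add_mul] using
      (tendsto_pow_mul_exp_neg_atTop_nhds_zero 1).add (tendsto_pow_mul_exp_neg_atTop_nhds_zero 0)
  have := (h.comp (tendsto_id.const_mul_atTop hr)).const_mul (1 / r)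
  rw [mul_zero] at this
  refine this.congr fun x => ?_
  simp only [Function.comp_apply, id]
  field_simp

lemma hasDerivAt_add_inv_mul_exp_neg (hr : r ≠ 0) (x : ℝ) :
    HasDerivAt (fun a => -((a + 1 / r) * exp (-(r * a)))) (r * exp (-(r * x)) * x) x := by
  have h1 : HasDerivAt (fun a => a + 1 / r) 1 x := (hasDerivAt_id' x).add_const _
  have h2 : HasDerivAt (fun a => exp (-(r * a))) (exp (-(r * x)) * -r) x := by
    simpa using ((hasDerivAt_id' x).const_mul r).fun_neg.exp
  refine (h1.fun_mul h2).fun_neg.congr_deriv ?_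
  field_simp
  ring

lemma setIntegral_Ioi_id_expMeasure (hr : 0 < r) {p : ℝ} (hp : 0 ≤ p) :
    ∫ x in Ioi p, x ∂expMeasure r = exp (-(r * p)) * (p + 1 / r) := by
  rw [setIntegral_expMeasure_of_subset_Ici hr.le measurableSet_Ioi (Ioi_subset_Ici hp),
    integral_Ioi_of_hasDerivAt_of_nonneg' (fun x _ => hasDerivAt_add_inv_mul_exp_neg hr.ne' x)
      (fun x hx => by have : 0 ≤ x := hp.trans hx.out.le; positivity)
      (by simpa using (tendsto_add_inv_mul_exp_neg_atTop hr).neg)]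
  ring

lemma expMeasure_real_Iic (hr : 0 < r) {p : ℝ} (hp : 0 ≤ p) :
    (expMeasure r).real (Iic p) = 1 - exp (-(r * p)) := by
  have := isProbabilityMeasure_expMeasure hr
  rw [← cdf_eq_real, cdf_expMeasure_eq hr, if_pos hp]

lemma expMeasure_real_Ioi (hr : 0 < r) {p : ℝ} (hp : 0 ≤ p) :
    (expMeasure r).real (Ioi p) = exp (-(r * p)) := by
  have := isProbabilityMeasure_expMeasure hr
  rw [← compl_Iic, probReal_compl_eq_one_sub measurableSet_Iic, expMeasure_real_Iic hr hp]
  ring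

lemma integral_id_expMeasure (hr : 0 < r) : ∫ x, x ∂expMeasure r = 1 / r := by
  have hpos : ∀ᵐ x ∂expMeasure r, x ∈ Ioi 0 := by
    have := isProbabilityMeasure_expMeasure hr
    rw [ae_iff]
    simp only [mem_Ioi, not_lt]
    exact (measureReal_eq_zero_iff (measure_ne_top _ _)).mp
      ((expMeasure_real_Iic hr le_rfl).trans (by simp))
  rw [← Measure.restrict_eq_self_of_ae_mem hpos, setIntegral_Ioi_id_expMeasure hr le_rfl]
  simp

lemma integral_Ioi_one_sub_cdf_mul_cdf_expMeasure {s b : ℝ} (hs : 0 < s) (hb : 0 < b) :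
    ∫ t in Ioi 0, (1 - cdf (expMeasure s) t * cdf (expMeasure b) t)
      = 1 / s + 1 / b - 1 / (s + b) := by
  have hsb : 0 < s + b := add_pos hs hb
  have h_int {r : ℝ} (hr : 0 < r) : IntegrableOn (fun t => exp (-(r * t))) (Ioi 0) := by
    simpa only [neg_mul] using exp_neg_integrableOn_Ioi 0 hr
  have h_eq : EqOn (fun t => 1 - cdf (expMeasure s) t * cdf (expMeasure b) t)
      (fun t => exp (-(s * t)) + exp (-(b * t)) - exp (-((s + b) * t))) (Ioi 0) := by
    intro t ht
    dsimp only
    rw [cdf_expMeasure_eq hs, cdf_expMeasure_eq hb, if_pos ht.out.le, if_pos ht.out.le,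
      show -((s + b) * t) = -(s * t) + -(b * t) by ring, exp_add]
    ring
  rw [setIntegral_congr_fun measurableSet_Ioi h_eq,
    integral_sub ((h_int hs).fun_add (h_int hb)) (h_int hsb), integral_add (h_int hs) (h_int hb),
    integral_exp_neg_mul_Ioi_zero hs, integral_exp_neg_mul_Ioi_zero hb,
    integral_exp_neg_mul_Ioi_zero hsb]

section Independent

variable {Ω 𝓧 𝓨 : Type*} [MeasurableSpace Ω] [MeasurableSpace 𝓧] [MeasurableSpace 𝓨]
  {μ : Measure Ω}

lemma IndepFun.integral_fun_comp_mul_comp_eq_mul_integral_map {X : Ω → 𝓧} {Y : Ω → 𝓨}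
    {f : 𝓧 → ℝ} {g : 𝓨 → ℝ} (hXY : IndepFun X Y μ) (hX : AEMeasurable X μ)
    (hY : AEMeasurable Y μ) (hf : AEStronglyMeasurable f (μ.map X))
    (hg : AEStronglyMeasurable g (μ.map Y)) :
    ∫ ω, f (X ω) * g (Y ω) ∂μ = (∫ x, f x ∂μ.map X) * ∫ y, g y ∂μ.map Y := by
  rw [hXY.integral_fun_comp_mul_comp hX hY hf hg, integral_map hX hf, integral_map hY hg]

lemma IndepFun.integral_max_eq_integral_cdf [IsProbabilityMeasure μ] {X Y : Ω → ℝ}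
    (hXY : IndepFun X Y μ) (hX : Measurable X) (hY : Measurable Y)
    (hXi : Integrable X μ) (hYi : Integrable Y μ) (hX0 : 0 ≤ᵐ[μ] X) :
    ∫ ω, max (X ω) (Y ω) ∂μ
      = ∫ t in Ioi 0, (1 - cdf (μ.map X) t * cdf (μ.map Y) t) := by
  have := Measure.isProbabilityMeasure_map (μ := μ) hX.aemeasurable
  have := Measure.isProbabilityMeasure_map (μ := μ) hY.aemeasurable
  refine ((hXi.sup hYi).integral_eq_integral_meas_lt
    (hX0.mono fun ω h => h.trans (le_max_left _ _))).trans
    (setIntegral_congr_fun measurableSet_Ioi fun t _ => ?_)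
  have h_compl : {ω | t < (X ⊔ Y) ω} = (X ⁻¹' Iic t ∩ Y ⁻¹' Iic t)ᶜ := by
    ext ω
    simp only [mem_ofPred_eq, Pi.sup_apply, lt_sup_iff, mem_compl_iff, mem_inter_iff, mem_preimage,
      mem_Iic, not_and_or, not_le]
  rw [h_compl, probReal_compl_eq_one_sub ((hX measurableSet_Iic).inter (hY measurableSet_Iic)),
    measureReal_def, hXY.measure_inter_preimage_eq_mul _ _ measurableSet_Iic measurableSet_Iic,
    cdf_eq_real, cdf_eq_real, map_measureReal_apply hX measurableSet_Iic,
    map_measureReal_apply hY measurableSet_Iic, ENNReal.toReal_mul, measureReal_def,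
    measureReal_def]

lemma IndepFun.integral_fixedPriceWelfare [IsProbabilityMeasure μ] {X Y : Ω → ℝ}
    (hXY : IndepFun X Y μ) (hX : Measurable X) (hY : Measurable Y)
    (hXi : Integrable X μ) (hYi : Integrable Y μ) (p : ℝ) :
    ∫ ω, fixedPriceWelfare p (X ω) (Y ω) ∂μ
      = (μ.map X).real (Iic p) * (∫ y in Ici p, y ∂μ.map Y)
        + (∫ x in Ioi p, x ∂μ.map X) * (μ.map Y).real (Ici p)
        + (∫ x, x ∂μ.map X) * (μ.map Y).real (Iio p) := by
  have h1 : Integrable (fun ω => (Iic p).indicator 1 (X ω) * (Ici p).indicator id (Y ω)) μ :=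
    (hYi.indicator_id_comp hY measurableSet_Ici).indicator_one_comp_mul hX measurableSet_Iic
  have h2 : Integrable (fun ω => (Ioi p).indicator id (X ω) * (Ici p).indicator 1 (Y ω)) μ :=
    (hXi.indicator_id_comp hX measurableSet_Ioi).mul_indicator_one_comp hY measurableSet_Ici
  have h3 : Integrable (fun ω => X ω * (Iio p).indicator 1 (Y ω)) μ :=
    hXi.mul_indicator_one_comp hY measurableSet_Iio
  have m_one {s : Set ℝ} (hs : MeasurableSet s) : Measurable (s.indicator (1 : ℝ → ℝ)) :=
    measurable_one.indicator hs
  have m_id {s : Set ℝ} (hs : MeasurableSet s) : Measurable (s.indicator (id : ℝ → ℝ)) :=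
    measurable_id.indicator hs
  have hXa := hX.aemeasurable (μ := μ)
  have hYa := hY.aemeasurable (μ := μ)
  simp_rw [fixedPriceWelfare_eq]
  rw [integral_add (h1.fun_add h2) h3, integral_add h1 h2,
    hXY.integral_fun_comp_mul_comp_eq_mul_integral_map hXa hYa
      (m_one measurableSet_Iic).aestronglyMeasurable (m_id measurableSet_Ici).aestronglyMeasurable,
    hXY.integral_fun_comp_mul_comp_eq_mul_integral_map hXa hYa
      (m_id measurableSet_Ioi).aestronglyMeasurable (m_one measurableSet_Ici).aestronglyMeasurable,
    hXY.integral_fun_comp_mul_comp_eq_mul_integral_map (f := fun x => x) hXa hYa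
      aestronglyMeasurable_id (m_one measurableSet_Iio).aestronglyMeasurable,
    integral_indicator_one measurableSet_Iic, integral_indicator_one measurableSet_Ici,
    integral_indicator_one measurableSet_Iio, integral_indicator measurableSet_Ici,
    integral_indicator measurableSet_Ioi]
  rfl

end Independent

end ProbabilityTheory

theorem exponential_welfare_formulas_general
    {Ω : Type*} [MeasurableSpace Ω] (μ : Measure Ω) [IsProbabilityMeasure μ]
    (vs vb : Ω → ℝ) (s b : ℝ) (hs : 0 < s) (hb : 0 < b)
    (hmeas_s : Measurable vs) (hmeas_b : Measurable vb)
    (hindep : IndepFun vs vb μ)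
    (hs_nonneg : ∀ ω, 0 ≤ vs ω)
    (hs_int : Integrable vs μ) (hb_int : Integrable vb μ)
    (hs_dist : μ.map vs = expMeasure s)
    (hb_dist : μ.map vb = expMeasure b) :
    (∀ p : ℝ, 0 ≤ p →
      ∫ ω, (if vs ω ≤ p ∧ p ≤ vb ω then vb ω else vs ω) ∂μ
        = exp (-(b * p)) * ((1 - exp (-(s * p))) * (p + 1 / b)
            + exp (-(s * p)) * (p + 1 / s))
          + (1 - exp (-(b * p))) * (1 / s)) ∧
      ∫ ω, max (vs ω) (vb ω) ∂μ = 1 / s + 1 / b - 1 / (s + b) := by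
  refine ⟨fun p hp => ?_, ?_⟩
  · change ∫ ω, fixedPriceWelfare p (vs ω) (vb ω) ∂μ = _
    rw [hindep.integral_fixedPriceWelfare hmeas_s hmeas_b hs_int hb_int, hs_dist, hb_dist,
      integral_Ici_eq_integral_Ioi, measureReal_congr Ioi_ae_eq_Ici.symm,
      measureReal_congr Iio_ae_eq_Iic, expMeasure_real_Iic hs hp, expMeasure_real_Iic hb hp,
      expMeasure_real_Ioi hb hp, setIntegral_Ioi_id_expMeasure hs hp,
      setIntegral_Ioi_id_expMeasure hb hp, integral_id_expMeasure hs]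
    ring
  · rw [hindep.integral_max_eq_integral_cdf hmeas_s hmeas_b hs_int hb_int
      (ae_of_all _ hs_nonneg), hs_dist, hb_dist, integral_Ioi_one_sub_cdf_mul_cdf_expMeasure hs hb]

/-- With the seller's value exponentially distributed with rate `s > 0` and the
buyer's value exponentially distributed with rate `b > 0` (independent), the expected
welfare of the fixed-price mechanism at any price `p ≥ 0` is
`e^{-bp}·((1 - e^{-sp})·(p + 1/b) + e^{-sp}·(p + 1/s)) + (1 - e^{-bp})·(1/s)`,
and the optimal expected welfare is `1/s + 1/b - 1/(s + b)`. -/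
theorem exponential_welfare_formulas
    {Ω : Type*} [MeasurableSpace Ω] (μ : Measure Ω) [IsProbabilityMeasure μ]
    (vs vb : Ω → ℝ) (s b : ℝ) (hs : 0 < s) (hb : 0 < b)
    (hmeas_s : Measurable vs) (hmeas_b : Measurable vb)
    (hindep : IndepFun vs vb μ)
    (hs_nonneg : ∀ ω, 0 ≤ vs ω) (hb_nonneg : ∀ ω, 0 ≤ vb ω)
    (hs_int : Integrable vs μ) (hb_int : Integrable vb μ)
    (hs_dist : μ.map vs = expMeasure s)
    (hb_dist : μ.map vb = expMeasure b) :
    (∀ p : ℝ, 0 ≤ p →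
      ∫ ω, (if vs ω ≤ p ∧ p ≤ vb ω then vb ω else vs ω) ∂μ
        = exp (-(b * p)) * ((1 - exp (-(s * p))) * (p + 1 / b)
            + exp (-(s * p)) * (p + 1 / s))
          + (1 - exp (-(b * p))) * (1 / s)) ∧
      ∫ ω, max (vs ω) (vb ω) ∂μ = 1 / s + 1 / b - 1 / (s + b) :=
  exponential_welfare_formulas_general μ vs vb s b hs hb hmeas_s hmeas_b hindep hs_nonneg hs_int
    hb_int hs_dist hb_dist
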